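/- Let Z = (U; V) and Z' = (U'; V') be pairs of factor matrices with U, U' ∈ ℝ^{n₁×r}, V, V' ∈ ℝ^{n₂×r}. Let d = d_P(Z, Z') and a = √2 · max{σ₁(U), σ₁(V)} · d + d²/2. Then ‖U'ᵀU' − V'ᵀV'‖_F ≤ ‖UᵀU − VᵀV‖_F + 2a. -/
import Mathlib

open Matrix

/-- Frobenius norm of a real matrix. -/
noncomputable def frob {m n : Type*} [Fintype m] [Fintype n] (A : Matrix m n ℝ) : ℝ :=
  Real.sqrt (∑ i, ∑ j, (A i j) ^ 2)

/-- Largest singular value (ℓ²-operator norm) of a real matrix. -/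
noncomputable def sigmaMax {m n : Type*} [Fintype m] [Fintype n] (A : Matrix m n ℝ) : ℝ :=
  sSup {c | ∃ x : n → ℝ, Real.sqrt (∑ j, (x j) ^ 2) = 1 ∧
    c = Real.sqrt (∑ i, (A.mulVec x i) ^ 2)}

/-- Smallest singular value of a real matrix (minimum of ‖Ax‖ over unit vectors x). -/
noncomputable def sigmaMin {m n : Type*} [Fintype m] [Fintype n] (A : Matrix m n ℝ) : ℝ :=
  sInf {c | ∃ x : n → ℝ, Real.sqrt (∑ j, (x j) ^ 2) = 1 ∧
    c = Real.sqrt (∑ i, (A.mulVec x i) ^ 2)}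

/-- The k-th largest singular value of a real matrix (Courant–Fischer max-min). -/
noncomputable def sigmaI {m n : Type*} [Fintype m] [Fintype n] (A : Matrix m n ℝ) (k : ℕ) : ℝ :=
  sSup {c | ∃ S : Submodule ℝ (n → ℝ), Module.finrank ℝ S = k ∧
    c = sInf {d | ∃ x ∈ S, Real.sqrt (∑ j, (x j) ^ 2) = 1 ∧
      d = Real.sqrt (∑ i, (A.mulVec x i) ^ 2)}}

/-- Procrustes distance: infimum of ‖Z₁ − Z₂ P‖_F over orthogonal P. -/
noncomputable def dP {N r : Type*} [Fintype N] [Fintype r] [DecidableEq r]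
    (Z₁ Z₂ : Matrix N r ℝ) : ℝ :=
  sInf {c | ∃ P : Matrix r r ℝ, Pᵀ * P = 1 ∧ c = frob (Z₁ - Z₂ * P)}

/-- Maximum Euclidean row norm ‖A‖_{2,∞}. -/
noncomputable def rowNorm {m n : Type*} [Fintype m] [Fintype n] (A : Matrix m n ℝ) : ℝ :=
  ⨆ i, Real.sqrt (∑ j, (A i j) ^ 2)

section Aux

variable {m n k : Type*} [Fintype m] [Fintype n] [Fintype k]

lemma frob_nonneg (A : Matrix m n ℝ) : 0 ≤ frob A := Real.sqrt_nonneg _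

lemma sum_sq_nonneg (A : Matrix m n ℝ) : 0 ≤ ∑ i, ∑ j, (A i j) ^ 2 := by
  apply Finset.sum_nonneg; intro i _; apply Finset.sum_nonneg; intro j _; positivity

lemma frob_sq (A : Matrix m n ℝ) : frob A ^ 2 = ∑ i, ∑ j, (A i j) ^ 2 :=
  Real.sq_sqrt (sum_sq_nonneg A)

lemma frob_transpose (A : Matrix m n ℝ) : frob Aᵀ = frob A := by
  unfold frob
  rw [Finset.sum_comm]
  rfl

lemma frob_neg (A : Matrix m n ℝ) : frob (-A) = frob A := by
  unfold frob; congr 1; simp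

lemma frob_eq_prod (A : Matrix m n ℝ) :
    frob A = Real.sqrt (∑ p : m × n, (A p.1 p.2) ^ 2) := by
  unfold frob
  rw [Fintype.sum_prod_type' (f := fun i j => (A i j) ^ 2)]

lemma frob_triangle (A B : Matrix m n ℝ) : frob (A + B) ≤ frob A + frob B := by
  rw [frob_eq_prod, frob_eq_prod, frob_eq_prod]
  set f : m × n → ℝ := fun p => A p.1 p.2 with hf
  set g : m × n → ℝ := fun p => B p.1 p.2 with hg
  have hfg : ∀ p : m × n, (A + B) p.1 p.2 = f p + g p := fun p => rfl
  have hCS : ∑ p : m × n, f p * g p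
      ≤ Real.sqrt (∑ p : m × n, f p ^ 2) * Real.sqrt (∑ p : m × n, g p ^ 2) :=
    Real.sum_mul_le_sqrt_mul_sqrt Finset.univ f g
  have hf0 : 0 ≤ ∑ p : m × n, f p ^ 2 := Finset.sum_nonneg fun p _ => sq_nonneg _
  have hg0 : 0 ≤ ∑ p : m × n, g p ^ 2 := Finset.sum_nonneg fun p _ => sq_nonneg _
  have expand : ∑ p : m × n, ((A + B) p.1 p.2) ^ 2
      = (∑ p : m × n, f p ^ 2) + 2 * (∑ p : m × n, f p * g p) + (∑ p : m × n, g p ^ 2) := by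
    have h1 : ∀ p ∈ Finset.univ, ((A + B) p.1 p.2) ^ 2
        = f p ^ 2 + 2 * (f p * g p) + g p ^ 2 := by
      intro p _; rw [hfg]; ring
    rw [Finset.sum_congr rfl h1, Finset.sum_add_distrib, Finset.sum_add_distrib,
      ← Finset.mul_sum]
  have hle : ∑ p : m × n, ((A + B) p.1 p.2) ^ 2
      ≤ (Real.sqrt (∑ p : m × n, f p ^ 2) + Real.sqrt (∑ p : m × n, g p ^ 2)) ^ 2 := by
    rw [expand]
    nlinarith [Real.sq_sqrt hf0, Real.sq_sqrt hg0, hCS]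
  calc Real.sqrt (∑ p : m × n, ((A + B) p.1 p.2) ^ 2)
      ≤ Real.sqrt ((Real.sqrt (∑ p : m × n, f p ^ 2)
          + Real.sqrt (∑ p : m × n, g p ^ 2)) ^ 2) := Real.sqrt_le_sqrt hle
    _ = _ := Real.sqrt_sq (by positivity)

lemma frob_sub_le (A B C : Matrix m n ℝ) :
    frob (A - C) ≤ frob (A - B) + frob (B - C) := by
  have : A - C = (A - B) + (B - C) := by abel
  rw [this]; exact frob_triangle _ _

/-- Cauchy–Schwarz style bound: ‖Ax‖ ≤ ‖A‖_F ‖x‖. -/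
lemma mulVec_le_frob (A : Matrix m n ℝ) (x : n → ℝ) :
    Real.sqrt (∑ i, (A.mulVec x i) ^ 2)
      ≤ frob A * Real.sqrt (∑ j, (x j) ^ 2) := by
  have hx : 0 ≤ ∑ j, (x j) ^ 2 := Finset.sum_nonneg fun j _ => sq_nonneg _
  have key : ∑ i, (A.mulVec x i) ^ 2 ≤ (∑ i, ∑ j, (A i j) ^ 2) * (∑ j, (x j) ^ 2) := by
    rw [Finset.sum_mul]
    apply Finset.sum_le_sum
    intro i _
    exact Finset.sum_mul_sq_le_sq_mul_sq Finset.univ (fun j => A i j) x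
  calc Real.sqrt (∑ i, (A.mulVec x i) ^ 2)
      ≤ Real.sqrt ((∑ i, ∑ j, (A i j) ^ 2) * (∑ j, (x j) ^ 2)) := Real.sqrt_le_sqrt key
    _ = frob A * Real.sqrt (∑ j, (x j) ^ 2) := Real.sqrt_mul (sum_sq_nonneg A) _

lemma sigmaMax_bddAbove (A : Matrix m n ℝ) :
    BddAbove {c | ∃ x : n → ℝ, Real.sqrt (∑ j, (x j) ^ 2) = 1 ∧
      c = Real.sqrt (∑ i, (A.mulVec x i) ^ 2)} := by
  refine ⟨frob A, ?_⟩
  rintro c ⟨x, hx, rfl⟩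
  have := mulVec_le_frob A x
  rw [hx, mul_one] at this
  exact this

lemma sigmaMax_nonneg (A : Matrix m n ℝ) : 0 ≤ sigmaMax A := by
  rcases Set.eq_empty_or_nonempty {c | ∃ x : n → ℝ, Real.sqrt (∑ j, (x j) ^ 2) = 1 ∧
      c = Real.sqrt (∑ i, (A.mulVec x i) ^ 2)} with h | h
  · unfold sigmaMax; rw [h, Real.sSup_empty]
  · obtain ⟨c, hc⟩ := h
    have h1 : c ≤ sigmaMax A := le_csSup (sigmaMax_bddAbove A) hc
    obtain ⟨x, -, rfl⟩ := hc
    exact le_trans (Real.sqrt_nonneg _) h1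

lemma sigmaMax_le_frob (A : Matrix m n ℝ) : sigmaMax A ≤ frob A := by
  apply Real.sSup_le _ (frob_nonneg A)
  rintro c ⟨x, hx, rfl⟩
  have := mulVec_le_frob A x
  rw [hx, mul_one] at this
  exact this

lemma mulVec_le_sigmaMax (A : Matrix m n ℝ) (x : n → ℝ) :
    Real.sqrt (∑ i, (A.mulVec x i) ^ 2)
      ≤ sigmaMax A * Real.sqrt (∑ j, (x j) ^ 2) := by
  set t := Real.sqrt (∑ j, (x j) ^ 2) with ht
  rcases eq_or_lt_of_le (Real.sqrt_nonneg (∑ j, (x j) ^ 2)) with h0 | h0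
  · -- t = 0, hence x = 0
    have hx : 0 ≤ ∑ j, (x j) ^ 2 := Finset.sum_nonneg fun j _ => sq_nonneg _
    have ht0 : t = 0 := ht.trans h0.symm
    have hsum : ∑ j, (x j) ^ 2 = 0 := by
      have h2 : t ^ 2 = ∑ j, (x j) ^ 2 := by rw [ht]; exact Real.sq_sqrt hx
      rw [ht0] at h2
      simpa using h2.symm
    have hx0 : x = 0 := by
      funext j
      have := (Finset.sum_eq_zero_iff_of_nonneg
        (fun j (_ : j ∈ Finset.univ) => sq_nonneg (x j))).1 hsum j (Finset.mem_univ j)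
      exact pow_eq_zero_iff (two_ne_zero) |>.1 this
    rw [hx0, Matrix.mulVec_zero, ht0, mul_zero]
    simp
  · -- t > 0
    have htpos : 0 < t := h0
    set y : n → ℝ := t⁻¹ • x with hy
    have hsumy : ∑ j, (y j) ^ 2 = t⁻¹ ^ 2 * ∑ j, (x j) ^ 2 := by
      rw [Finset.mul_sum]
      apply Finset.sum_congr rfl
      intro j _
      simp [hy]
      ring
    have hts : t ^ 2 = ∑ j, (x j) ^ 2 :=
      Real.sq_sqrt (Finset.sum_nonneg fun j _ => sq_nonneg _)
    have hny : Real.sqrt (∑ j, (y j) ^ 2) = 1 := by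
      rw [hsumy, ← hts]
      rw [show t⁻¹ ^ 2 * t ^ 2 = 1 by field_simp]
      exact Real.sqrt_one
    have hmem : Real.sqrt (∑ i, (A.mulVec y i) ^ 2) ≤ sigmaMax A :=
      le_csSup (sigmaMax_bddAbove A) ⟨y, hny, rfl⟩
    have hAy : A.mulVec y = t⁻¹ • A.mulVec x := by
      rw [hy, Matrix.mulVec_smul]
    have hsAy : ∑ i, (A.mulVec y i) ^ 2 = t⁻¹ ^ 2 * ∑ i, (A.mulVec x i) ^ 2 := by
      rw [hAy, Finset.mul_sum]
      apply Finset.sum_congr rfl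
      intro i _
      simp
      ring
    have hs : Real.sqrt (∑ i, (A.mulVec y i) ^ 2)
        = t⁻¹ * Real.sqrt (∑ i, (A.mulVec x i) ^ 2) := by
      rw [hsAy, Real.sqrt_mul (by positivity), Real.sqrt_sq (by positivity)]
    rw [hs] at hmem
    have := mul_le_mul_of_nonneg_left hmem (le_of_lt htpos)
    rw [← mul_assoc, mul_inv_cancel₀ (ne_of_gt htpos), one_mul] at this
    linarith [this]

/-- Operator norm bound for the transpose: ‖Aᵀ y‖ ≤ σmax(A) ‖y‖. -/
lemma transpose_mulVec_le_sigmaMax (A : Matrix m n ℝ) (y : m → ℝ) :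
    Real.sqrt (∑ j, (Aᵀ.mulVec y j) ^ 2)
      ≤ sigmaMax A * Real.sqrt (∑ i, (y i) ^ 2) := by
  set z : n → ℝ := Aᵀ.mulVec y with hz
  set nz := Real.sqrt (∑ j, (z j) ^ 2) with hnz
  have hzsum : ∑ j, (z j) ^ 2 = (A.mulVec z) ⬝ᵥ y := by
    have h1 : ∑ j, (z j) ^ 2 = z ⬝ᵥ Aᵀ.mulVec y := by
      rw [← hz]
      unfold dotProduct
      apply Finset.sum_congr rfl
      intro j _
      ring
    rw [h1, Matrix.dotProduct_mulVec, Matrix.vecMul_transpose]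
  have hdot : (A.mulVec z) ⬝ᵥ y
      ≤ Real.sqrt (∑ i, (A.mulVec z i) ^ 2) * Real.sqrt (∑ i, (y i) ^ 2) :=
    Real.sum_mul_le_sqrt_mul_sqrt Finset.univ _ _
  have hAz : Real.sqrt (∑ i, (A.mulVec z i) ^ 2) ≤ sigmaMax A * nz :=
    mulVec_le_sigmaMax A z
  have hnz2 : nz ^ 2 = ∑ j, (z j) ^ 2 :=
    Real.sq_sqrt (Finset.sum_nonneg fun j _ => sq_nonneg _)
  have hy0 : 0 ≤ Real.sqrt (∑ i, (y i) ^ 2) := Real.sqrt_nonneg _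
  have hkey : nz ^ 2 ≤ sigmaMax A * nz * Real.sqrt (∑ i, (y i) ^ 2) := by
    rw [hnz2, hzsum]
    calc (A.mulVec z) ⬝ᵥ y
        ≤ Real.sqrt (∑ i, (A.mulVec z i) ^ 2) * Real.sqrt (∑ i, (y i) ^ 2) := hdot
      _ ≤ sigmaMax A * nz * Real.sqrt (∑ i, (y i) ^ 2) :=
          mul_le_mul_of_nonneg_right hAz hy0
  rcases eq_or_lt_of_le (Real.sqrt_nonneg (∑ j, (z j) ^ 2)) with h0 | h0
  · have hnz0 : nz = 0 := hnz.trans h0.symm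
    rw [hnz0]; exact mul_nonneg (sigmaMax_nonneg A) hy0
  · have : nz * nz ≤ (sigmaMax A * Real.sqrt (∑ i, (y i) ^ 2)) * nz := by nlinarith
    have := le_of_mul_le_mul_right (by linarith [this] : nz * nz ≤ (sigmaMax A * Real.sqrt (∑ i, (y i) ^ 2)) * nz) h0
    exact this

/-- ‖Aᵀ B‖_F ≤ σmax(A) ‖B‖_F. -/
lemma frob_transpose_mul_le (A : Matrix m n ℝ) (B : Matrix m k ℝ) :
    frob (Aᵀ * B) ≤ sigmaMax A * frob B := by
  have hcol : ∀ j, ∑ i, ((Aᵀ * B) i j) ^ 2 ≤ sigmaMax A ^ 2 * ∑ i, (B i j) ^ 2 := by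
    intro j
    have h1 : ∀ i, (Aᵀ * B) i j = Aᵀ.mulVec (fun l => B l j) i := by
      intro i
      simp [Matrix.mul_apply, Matrix.mulVec, dotProduct]
    have h2 := transpose_mulVec_le_sigmaMax A (fun l => B l j)
    have h3 : 0 ≤ ∑ i, (Aᵀ.mulVec (fun l => B l j) i) ^ 2 :=
      Finset.sum_nonneg fun i _ => sq_nonneg _
    have h4 : 0 ≤ ∑ i, (B i j) ^ 2 := Finset.sum_nonneg fun i _ => sq_nonneg _
    have h5 : ∑ i, (Aᵀ.mulVec (fun l => B l j) i) ^ 2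
        ≤ sigmaMax A ^ 2 * ∑ i, (B i j) ^ 2 := by
      nlinarith [Real.sq_sqrt h3, Real.sq_sqrt h4, Real.sqrt_nonneg (∑ i, (Aᵀ.mulVec (fun l => B l j) i) ^ 2), Real.sqrt_nonneg (∑ i, (B i j) ^ 2), sigmaMax_nonneg A]
    calc ∑ i, ((Aᵀ * B) i j) ^ 2 = ∑ i, (Aᵀ.mulVec (fun l => B l j) i) ^ 2 := by
          apply Finset.sum_congr rfl; intro i _; rw [h1]
      _ ≤ sigmaMax A ^ 2 * ∑ i, (B i j) ^ 2 := h5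
  have key : frob (Aᵀ * B) ^ 2 ≤ sigmaMax A ^ 2 * frob B ^ 2 := by
    rw [frob_sq, frob_sq, Finset.sum_comm, Finset.sum_comm (s := Finset.univ) (t := Finset.univ) (f := fun i j => (B i j) ^ 2), Finset.mul_sum]
    exact Finset.sum_le_sum fun j _ => hcol j
  have h1 : frob (Aᵀ * B) = Real.sqrt (frob (Aᵀ * B) ^ 2) :=
    (Real.sqrt_sq (frob_nonneg _)).symm
  have h2 : Real.sqrt (sigmaMax A ^ 2 * frob B ^ 2) = sigmaMax A * frob B := by
    rw [show sigmaMax A ^ 2 * frob B ^ 2 = (sigmaMax A * frob B) ^ 2 by ring]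
    exact Real.sqrt_sq (mul_nonneg (sigmaMax_nonneg A) (frob_nonneg B))
  rw [h1, ← h2]
  exact Real.sqrt_le_sqrt key

end Aux

section Orth

variable {r m k : Type*} [Fintype r] [Fintype k] [Fintype m] [DecidableEq r]

lemma mulVec_orth_sum (P : Matrix r r ℝ) (hP : Pᵀ * P = 1) (x : r → ℝ) :
    ∑ i, (P.mulVec x i) ^ 2 = ∑ j, (x j) ^ 2 := by
  have h1 : ∑ i, (P.mulVec x i) ^ 2 = (P.mulVec x) ⬝ᵥ (P.mulVec x) := by
    unfold dotProduct; apply Finset.sum_congr rfl; intro i _; ring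
  have h2 : (P.mulVec x) ⬝ᵥ (P.mulVec x) = x ⬝ᵥ x := by
    rw [Matrix.dotProduct_mulVec]
    have h3 : (P *ᵥ x) ᵥ* P = x ᵥ* (Pᵀ * P) := by
      rw [← Matrix.vecMul_vecMul, Matrix.vecMul_transpose]
    rw [h3, hP, Matrix.vecMul_one]
  rw [h1, h2]
  unfold dotProduct; apply Finset.sum_congr rfl; intro j _; ring

lemma frob_orth_left (P : Matrix r r ℝ) (hP : Pᵀ * P = 1) (B : Matrix r k ℝ) :
    frob (P * B) = frob B := by
  unfold frob
  congr 1
  rw [Finset.sum_comm, Finset.sum_comm (s := Finset.univ) (t := Finset.univ) (f := fun i j => (B i j) ^ 2)]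
  apply Finset.sum_congr rfl
  intro j _
  have h1 : ∀ i, (P * B) i j = P.mulVec (fun l => B l j) i := by
    intro i; simp [Matrix.mul_apply, Matrix.mulVec, dotProduct]
  calc ∑ i, ((P * B) i j) ^ 2 = ∑ i, (P.mulVec (fun l => B l j) i) ^ 2 := by
        apply Finset.sum_congr rfl; intro i _; rw [h1]
    _ = ∑ i, (B i j) ^ 2 := mulVec_orth_sum P hP _

lemma frob_orth_right (P : Matrix r r ℝ) (hP : Pᵀ * P = 1) (B : Matrix m r ℝ) :
    frob (B * P) = frob B := by
  have hP' : (Pᵀ)ᵀ * Pᵀ = 1 := by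
    rw [Matrix.transpose_transpose]
    exact mul_eq_one_comm.mp hP
  calc frob (B * P) = frob ((B * P)ᵀ) := (frob_transpose _).symm
    _ = frob (Pᵀ * Bᵀ) := by rw [Matrix.transpose_mul]
    _ = frob Bᵀ := frob_orth_left Pᵀ hP' Bᵀ
    _ = frob B := frob_transpose B

lemma frob_conj (P : Matrix r r ℝ) (hP : Pᵀ * P = 1) (M : Matrix r r ℝ) :
    frob (Pᵀ * M * P) = frob M := by
  have hP' : (Pᵀ)ᵀ * Pᵀ = 1 := by
    rw [Matrix.transpose_transpose]
    exact mul_eq_one_comm.mp hP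
  rw [Matrix.mul_assoc, frob_orth_left Pᵀ hP' (M * P), frob_orth_right P hP M]

end Orth

section Main

variable {m₁ m₂ r : Type*} [Fintype m₁] [Fintype m₂] [Fintype r] [DecidableEq r]

lemma frob_fromRows_sq (A : Matrix m₁ r ℝ) (B : Matrix m₂ r ℝ) :
    frob (Matrix.fromRows A B) ^ 2 = frob A ^ 2 + frob B ^ 2 := by
  rw [frob_sq, frob_sq, frob_sq, Fintype.sum_sum_type]
  simp

set_option maxHeartbeats 1000000 in
lemma key_bound (U U' : Matrix m₁ r ℝ) (V V' : Matrix m₂ r ℝ)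
    (P : Matrix r r ℝ) (hP : Pᵀ * P = 1) :
    frob (U'ᵀ * U' - V'ᵀ * V')
      ≤ frob (Uᵀ * U - Vᵀ * V)
        + 2 * Real.sqrt 2 * max (sigmaMax U) (sigmaMax V)
            * frob (Matrix.fromRows U V - Matrix.fromRows U' V' * P)
        + frob (Matrix.fromRows U V - Matrix.fromRows U' V' * P) ^ 2 := by
  set X := U' * P with hX
  set Y := V' * P with hY
  set DU := X - U with hDU
  set DV := Y - V with hDV
  set c := frob (Matrix.fromRows U V - Matrix.fromRows U' V' * P) with hc
  set s := max (sigmaMax U) (sigmaMax V) with hs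
  have hs0 : 0 ≤ s := le_trans (sigmaMax_nonneg U) (le_max_left _ _)
  have hsU : sigmaMax U ≤ s := le_max_left _ _
  have hsV : sigmaMax V ≤ s := le_max_right _ _
  have hC : Matrix.fromRows U V - Matrix.fromRows U' V' * P
      = Matrix.fromRows (-DU) (-DV) := by
    rw [Matrix.fromRows_mul]
    ext i j
    cases i <;> simp [hDU, hDV, hX, hY, Matrix.sub_apply, Matrix.neg_apply]
  have hc2 : c ^ 2 = frob DU ^ 2 + frob DV ^ 2 := by
    rw [hc, hC, frob_fromRows_sq, frob_neg, frob_neg]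
  have hfU0 : 0 ≤ frob DU := frob_nonneg _
  have hfV0 : 0 ≤ frob DV := frob_nonneg _
  have hc0 : 0 ≤ c := frob_nonneg _
  have hsqrt2 : Real.sqrt 2 ^ 2 = 2 := Real.sq_sqrt (by norm_num)
  have hsqrt2' : 0 ≤ Real.sqrt 2 := Real.sqrt_nonneg 2
  have hsum_le : frob DU + frob DV ≤ Real.sqrt 2 * c := by
    have h1 : (frob DU + frob DV) ^ 2 ≤ 2 * c ^ 2 := by
      rw [hc2]; nlinarith [sq_nonneg (frob DU - frob DV)]
    nlinarith [mul_nonneg hsqrt2' hc0, h1]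
  -- conjugation invariance
  have hLconj : frob (U'ᵀ * U' - V'ᵀ * V') = frob (Xᵀ * X - Yᵀ * Y) := by
    have h : Xᵀ * X - Yᵀ * Y = Pᵀ * (U'ᵀ * U' - V'ᵀ * V') * P := by
      rw [hX, hY]
      simp only [Matrix.transpose_mul]
      rw [Matrix.mul_sub, Matrix.sub_mul]
      simp only [Matrix.mul_assoc]
    rw [h, frob_conj P hP]
  -- algebraic decomposition
  have key' : Xᵀ * X - Yᵀ * Y
      = (Uᵀ * U - Vᵀ * V)
        + ((DUᵀ * U + Uᵀ * DU + DUᵀ * DU) - (DVᵀ * V + Vᵀ * DV + DVᵀ * DV)) := by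
    rw [hDU, hDV, hX, hY]
    simp only [Matrix.transpose_sub, Matrix.transpose_mul, Matrix.sub_mul,
      Matrix.mul_sub, Matrix.mul_assoc]
    abel
  set EU := DUᵀ * U + Uᵀ * DU + DUᵀ * DU with hEU
  set EV := DVᵀ * V + Vᵀ * DV + DVᵀ * DV with hEV
  have htri : frob (Xᵀ * X - Yᵀ * Y) ≤ frob (Uᵀ * U - Vᵀ * V) + (frob EU + frob EV) := by
    rw [key']
    calc frob ((Uᵀ * U - Vᵀ * V) + (EU - EV))
        ≤ frob (Uᵀ * U - Vᵀ * V) + frob (EU - EV) := frob_triangle _ _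
      _ ≤ frob (Uᵀ * U - Vᵀ * V) + (frob EU + frob EV) := by
          have h1 : EU - EV = EU + (-EV) := by abel
          have h2 : frob (EU - EV) ≤ frob EU + frob EV := by
            rw [h1]
            calc frob (EU + -EV) ≤ frob EU + frob (-EV) := frob_triangle _ _
              _ = frob EU + frob EV := by rw [frob_neg]
          linarith
  have hEUb : frob EU ≤ 2 * sigmaMax U * frob DU + frob DU ^ 2 := by
    have t1 : frob (DUᵀ * U) = frob (Uᵀ * DU) := by
      rw [← frob_transpose (DUᵀ * U), Matrix.transpose_mul, Matrix.transpose_transpose]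
    have t2 : frob (Uᵀ * DU) ≤ sigmaMax U * frob DU := frob_transpose_mul_le U DU
    have t3 : frob (DUᵀ * DU) ≤ frob DU * frob DU :=
      le_trans (frob_transpose_mul_le DU DU)
        (mul_le_mul_of_nonneg_right (sigmaMax_le_frob DU) hfU0)
    calc frob EU ≤ frob (DUᵀ * U + Uᵀ * DU) + frob (DUᵀ * DU) := frob_triangle _ _
      _ ≤ (frob (DUᵀ * U) + frob (Uᵀ * DU)) + frob (DUᵀ * DU) := by
          linarith [frob_triangle (DUᵀ * U) (Uᵀ * DU)]
      _ ≤ 2 * sigmaMax U * frob DU + frob DU ^ 2 := by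
          rw [t1]; nlinarith [t2, t3]
  have hEVb : frob EV ≤ 2 * sigmaMax V * frob DV + frob DV ^ 2 := by
    have t1 : frob (DVᵀ * V) = frob (Vᵀ * DV) := by
      rw [← frob_transpose (DVᵀ * V), Matrix.transpose_mul, Matrix.transpose_transpose]
    have t2 : frob (Vᵀ * DV) ≤ sigmaMax V * frob DV := frob_transpose_mul_le V DV
    have t3 : frob (DVᵀ * DV) ≤ frob DV * frob DV :=
      le_trans (frob_transpose_mul_le DV DV)
        (mul_le_mul_of_nonneg_right (sigmaMax_le_frob DV) hfV0)
    calc frob EV ≤ frob (DVᵀ * V + Vᵀ * DV) + frob (DVᵀ * DV) := frob_triangle _ _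
      _ ≤ (frob (DVᵀ * V) + frob (Vᵀ * DV)) + frob (DVᵀ * DV) := by
          linarith [frob_triangle (DVᵀ * V) (Vᵀ * DV)]
      _ ≤ 2 * sigmaMax V * frob DV + frob DV ^ 2 := by
          rw [t1]; nlinarith [t2, t3]
  have hfinal : frob EU + frob EV ≤ 2 * Real.sqrt 2 * s * c + c ^ 2 := by
    have h1 : frob EU + frob EV
        ≤ 2 * s * (frob DU + frob DV) + (frob DU ^ 2 + frob DV ^ 2) := by
      nlinarith [hEUb, hEVb, mul_le_mul_of_nonneg_right hsU hfU0,
        mul_le_mul_of_nonneg_right hsV hfV0]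
    have h2 : 2 * s * (frob DU + frob DV) ≤ 2 * s * (Real.sqrt 2 * c) :=
      mul_le_mul_of_nonneg_left hsum_le (by linarith)
    rw [← hc2] at h1
    nlinarith [h1, h2]
  rw [hLconj]
  linarith [htri, hfinal]

end Main

theorem balance_diff_le (n₁ n₂ r : ℕ)
    (U U' : Matrix (Fin n₁) (Fin r) ℝ) (V V' : Matrix (Fin n₂) (Fin r) ℝ) :
    frob (U'ᵀ * U' - V'ᵀ * V')
      ≤ frob (Uᵀ * U - Vᵀ * V) +
        2 * (Real.sqrt 2 * max (sigmaMax U) (sigmaMax V) *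
              dP (Matrix.fromRows U V) (Matrix.fromRows U' V') +
            dP (Matrix.fromRows U V) (Matrix.fromRows U' V') ^ 2 / 2) := by
  set Z := Matrix.fromRows U V with hZ
  set Z' := Matrix.fromRows U' V' with hZ'
  set s := max (sigmaMax U) (sigmaMax V) with hs
  set D := dP Z Z' with hDdef
  set M0 := frob (Uᵀ * U - Vᵀ * V) with hM0
  set L := frob (U'ᵀ * U' - V'ᵀ * V') with hL
  set S : Set ℝ := {c | ∃ P : Matrix (Fin r) (Fin r) ℝ, Pᵀ * P = 1 ∧
    c = frob (Z - Z' * P)} with hS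
  have hs0 : 0 ≤ s := le_trans (sigmaMax_nonneg U) (le_max_left _ _)
  have hsqrt2' : 0 ≤ Real.sqrt 2 := Real.sqrt_nonneg 2
  have hne : S.Nonempty := by
    refine ⟨frob (Z - Z' * 1), 1, ?_, rfl⟩
    rw [Matrix.transpose_one, Matrix.one_mul]
  have hposS : ∀ c ∈ S, 0 ≤ c := by
    rintro c ⟨P, hP, rfl⟩
    exact frob_nonneg _
  have hDS : D = sInf S := rfl
  have hD0 : 0 ≤ D := by rw [hDS]; exact Real.sInf_nonneg hposS
  have hper : ∀ c ∈ S, L ≤ M0 + 2 * Real.sqrt 2 * s * c + c ^ 2 := by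
    rintro c ⟨P, hP, rfl⟩
    exact key_bound U U' V V' P hP
  have main : L ≤ M0 + 2 * Real.sqrt 2 * s * D + D ^ 2 := by
    apply le_of_forall_pos_le_add
    intro ε hε
    have hK0 : 0 < 2 * Real.sqrt 2 * s + 2 * D + 1 := by nlinarith
    set K := 2 * Real.sqrt 2 * s + 2 * D + 1 with hK
    set δ := min 1 (ε / K) with hδ
    have hδ0 : 0 < δ := lt_min one_pos (div_pos hε hK0)
    have hδ1 : δ ≤ 1 := min_le_left _ _
    have hδε : δ * K ≤ ε := by
      have h1 : δ ≤ ε / K := min_le_right _ _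
      calc δ * K ≤ (ε / K) * K := mul_le_mul_of_nonneg_right h1 (le_of_lt hK0)
        _ = ε := div_mul_cancel₀ ε (ne_of_gt hK0)
    obtain ⟨c, hcS, hclt⟩ := Real.lt_sInf_add_pos hne hδ0
    rw [← hDS] at hclt
    have h1 := hper c hcS
    have hc0 := hposS c hcS
    have hb1 : 0 ≤ D + δ - c := by linarith
    have hb2 : (0:ℝ) ≤ 2 * Real.sqrt 2 * s := by positivity
    nlinarith [mul_nonneg hb1 hb2, mul_nonneg hb1 (by linarith : (0:ℝ) ≤ D + δ + c),
      mul_le_mul_of_nonneg_left hδ1 (le_of_lt hδ0), hδε, hδ0.le, hD0, hc0]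
  have hring : M0 + 2 * (Real.sqrt 2 * s * D + D ^ 2 / 2)
      = M0 + 2 * Real.sqrt 2 * s * D + D ^ 2 := by ring
  rw [hring]
  exact main
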